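/- arXiv:1008.4896 — 6 statements merged into one kernel-verified Lean document; each statement's English description precedes it below -/
import Mathlib

section
/- Let ι be a finite nonempty index set, c : ι → ℝ with c(i) > 0 for all i, d : ι → ℝ, e > 0, K₁ > 0, and K₂ ∈ ℝ. Consider minimizing ∑_i β(i) + Δ over all (β, Δ) with β(i) ≥ 0 for all i, Δ ≥ 0, ∑_i c(i)β(i) = K₁, and ∑_i d(i)β(i) + e·Δ = K₂. Suppose (β*, Δ*) is an optimal solution with Δ* > 0, and suppose the minimum of (e − d(i))/c(i) over i ∈ ι is attained at a unique index i*. Then β*(j) = 0 for every j ≠ i*, β*(i*) = K₁/c(i*), and the optimal value equals K₂/e + (K₁/e)·(e − d(i*))/c(i*). -/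
/-!
Eliminating `Δ` through the second constraint turns the objective into
`(K₂ + ∑ i, (e - d i) * β i) / e = (K₂ + ∑ i, r i * (c i * β i)) / e` with `r i = (e - d i) / c i`,
a linear function of the weights `c i * β i`, which sum to `K₁`. Because `Δ* > 0`, the constraint
`Δ ≥ 0` is slack at the optimum, so moving a little from `β*` towards the point `β₀` that puts all
of the weight `K₁` on `i*` stays feasible; by linearity `β*` is then no worse than `β₀`. But
`∑ r i * w i ≥ r i* * ∑ w i` for nonnegative weights, with equality only if the weights vanish off
`i*`, and `β₀` attains this bound.
-/

open Finset

theorem sum_mul_add_mul_sub {ι R : Type*} [CommRing R] (s : Finset ι) (f x y : ι → R) (t : R) :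
    ∑ i ∈ s, f i * (x i + t * (y i - x i)) =
      ∑ i ∈ s, f i * x i + t * (∑ i ∈ s, f i * y i - ∑ i ∈ s, f i * x i) := by
  rw [mul_sub, mul_sum, mul_sum, ← sum_sub_distrib, ← sum_add_distrib]
  exact sum_congr rfl fun i _ => by ring

theorem eq_zero_of_sum_mul_le_mul_sum {ι R : Type*} [Fintype ι] [CommRing R] [LinearOrder R]
    [IsStrictOrderedRing R] {r w : ι → R} {i₀ : ι} (hw : ∀ i, 0 ≤ w i)
    (hr : ∀ i, i ≠ i₀ → r i₀ < r i) (h : ∑ i, r i * w i ≤ r i₀ * ∑ i, w i) :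
    ∀ j, j ≠ i₀ → w j = 0 := by
  have hterm : ∀ i, 0 ≤ (r i - r i₀) * w i := fun i => by
    rcases eq_or_ne i i₀ with rfl | hi
    · simp
    · exact mul_nonneg (sub_nonneg.mpr (hr i hi).le) (hw i)
  have hsum : ∑ i, (r i - r i₀) * w i = 0 := by
    refine le_antisymm ?_ (sum_nonneg fun i _ => hterm i)
    simpa only [sub_mul, sum_sub_distrib, ← mul_sum, sub_nonpos] using h
  intro j hj
  have := (sum_eq_zero_iff_of_nonneg fun i _ => hterm i).mp hsum j (mem_univ j)
  exact (mul_eq_zero.mp this).resolve_left (sub_ne_zero.mpr (hr j hj).ne')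

section StageProblem

variable {ι : Type*} [Fintype ι] {c d : ι → ℝ} {e K₁ K₂ : ℝ}

theorem sum_add_eq_of_constraint {β : ι → ℝ} {Δ : ℝ} (he : e ≠ 0)
    (h : ∑ i, d i * β i + e * Δ = K₂) :
    ∑ i, β i + Δ = (K₂ + ∑ i, (e - d i) * β i) / e := by
  rw [eq_div_iff he, ← h]
  simp only [sub_mul, sum_sub_distrib, ← mul_sum]
  ring

theorem sum_add_le_of_optimal_of_pos {βstar β : ι → ℝ} {Δstar Δ : ℝ}
    (hβstar : ∀ i, 0 ≤ βstar i) (hc1 : ∑ i, c i * βstar i = K₁)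
    (hc2 : ∑ i, d i * βstar i + e * Δstar = K₂)
    (hopt : ∀ (β : ι → ℝ) (Δ : ℝ), (∀ i, 0 ≤ β i) → 0 ≤ Δ →
      ∑ i, c i * β i = K₁ → ∑ i, d i * β i + e * Δ = K₂ →
      ∑ i, βstar i + Δstar ≤ ∑ i, β i + Δ)
    (hΔpos : 0 < Δstar) (hβ : ∀ i, 0 ≤ β i) (hc1' : ∑ i, c i * β i = K₁)
    (hc2' : ∑ i, d i * β i + e * Δ = K₂) :
    ∑ i, βstar i + Δstar ≤ ∑ i, β i + Δ := by
  set t := Δstar / (Δstar + |Δ|)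
  have hden : 0 < Δstar + |Δ| := by positivity
  have ht : 0 < t := div_pos hΔpos hden
  have ht1 : t ≤ 1 := (div_le_one hden).mpr (by linarith [abs_nonneg Δ])
  have hΔt : 0 ≤ Δstar + t * (Δ - Δstar) := by
    have : t * (Δstar + |Δ|) = Δstar := div_mul_cancel₀ _ hden.ne'
    nlinarith [neg_abs_le Δ]
  have hβt : ∀ i, 0 ≤ βstar i + t * (β i - βstar i) := fun i => by
    nlinarith [hβstar i, hβ i]
  have hseg := hopt _ _ hβt hΔt
    (by rw [sum_mul_add_mul_sub, hc1, hc1', sub_self, mul_zero, add_zero])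
    (by rw [sum_mul_add_mul_sub]; linear_combination hc2 + t * (hc2' - hc2))
  have hobj := sum_mul_add_mul_sub univ (fun _ => (1 : ℝ)) βstar β t
  simp only [one_mul] at hobj
  rw [hobj] at hseg
  nlinarith

theorem eq_zero_of_sum_sub_mul_le (hc : ∀ i, 0 < c i) {β : ι → ℝ} (hβ : ∀ i, 0 ≤ β i) {i₀ : ι}
    (hmin : ∀ i, i ≠ i₀ → (e - d i₀) / c i₀ < (e - d i) / c i)
    (h : ∑ i, (e - d i) * β i ≤ (e - d i₀) / c i₀ * ∑ i, c i * β i) :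
    ∀ j, j ≠ i₀ → β j = 0 := by
  have hrc : ∀ i, (e - d i) / c i * (c i * β i) = (e - d i) * β i := fun i => by
    field_simp [(hc i).ne']
  intro j hj
  refine (mul_eq_zero.mp ?_).resolve_left (hc j).ne'
  exact eq_zero_of_sum_mul_le_mul_sum (r := fun i => (e - d i) / c i)
    (fun i => mul_nonneg (hc i).le (hβ i)) hmin
    (by simpa only [hrc] using h) j hj

end StageProblem

theorem stage_subproblem_single_transmitter_general (ι : Type*) [Fintype ι]
    (c d : ι → ℝ) (hc : ∀ i, 0 < c i)
    (e K₁ K₂ : ℝ) (he : 0 < e)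
    (βstar : ι → ℝ) (Δstar : ℝ)
    (hβ : ∀ i, 0 ≤ βstar i)
    (hc1 : ∑ i, c i * βstar i = K₁)
    (hc2 : ∑ i, d i * βstar i + e * Δstar = K₂)
    (hopt : ∀ (β : ι → ℝ) (Δ : ℝ), (∀ i, 0 ≤ β i) → 0 ≤ Δ →
      ∑ i, c i * β i = K₁ → ∑ i, d i * β i + e * Δ = K₂ →
      ∑ i, βstar i + Δstar ≤ ∑ i, β i + Δ)
    (hΔpos : 0 < Δstar)
    (istar : ι)
    (huniq : ∀ i, i ≠ istar → (e - d istar) / c istar < (e - d i) / c i) :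
    (∀ j, j ≠ istar → βstar j = 0) ∧
    βstar istar = K₁ / c istar ∧
    ∑ i, βstar i + Δstar = K₂ / e + (K₁ / e) * ((e - d istar) / c istar) := by
  classical
  have hK₁ : 0 ≤ K₁ := hc1 ▸ sum_nonneg fun i _ => mul_nonneg (hc i).le (hβ i)
  set β₀ : ι → ℝ := Pi.single istar (K₁ / c istar)
  have hβ₀ : ∀ f : ι → ℝ, ∑ i, f i * β₀ i = f istar * (K₁ / c istar) := fun f => by
    simp [β₀, Pi.single_apply]
  have hc2₀ : ∑ i, d i * β₀ i + e * ((K₂ - d istar * (K₁ / c istar)) / e) = K₂ := by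
    rw [hβ₀]; field_simp; ring
  have hle := sum_add_le_of_optimal_of_pos hβ hc1 hc2 hopt hΔpos
    (Pi.single_nonneg.mpr (div_nonneg hK₁ (hc istar).le) : 0 ≤ β₀)
    (by rw [hβ₀]; field_simp [(hc istar).ne']) hc2₀
  rw [sum_add_eq_of_constraint he.ne' hc2, sum_add_eq_of_constraint he.ne' hc2₀, hβ₀,
    div_le_div_iff_of_pos_right he, add_le_add_iff_left] at hle
  have hsupp : ∀ j, j ≠ istar → βstar j = 0 := eq_zero_of_sum_sub_mul_le hc hβ huniq
    (by rwa [hc1, div_mul_eq_mul_div, mul_div_assoc])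
  have hsum : ∀ f : ι → ℝ, ∑ i, f i * βstar i = f istar * βstar istar := fun f =>
    sum_eq_single istar (fun j _ hj => by rw [hsupp j hj, mul_zero]) (by simp)
  have hβi : βstar istar = K₁ / c istar := by
    rw [eq_div_iff (hc istar).ne', mul_comm, ← hsum, hc1]
  refine ⟨hsupp, hβi, ?_⟩
  rw [sum_add_eq_of_constraint he.ne' hc2, hsum, hβi]
  field_simp

/-- structure of the stage subproblem.  Minimize `∑ i, β i + Δ`
subject to `β ≥ 0`, `Δ ≥ 0`, `∑ i, c i * β i = K₁`, `∑ i, d i * β i + e * Δ = K₂`,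
with `c i > 0`, `e > 0`, `K₁ > 0`.  If `(β*, Δ*)` is optimal with `Δ* > 0` and the
minimum of `(e - d i) / c i` is attained at the unique index `i*`, then `β*` is
supported on `i*` with `β* i* = K₁ / c i*`, and the optimal value equals
`K₂ / e + (K₁ / e) * (e - d i*) / c i*`. -/
theorem stage_subproblem_single_transmitter (ι : Type*) [Fintype ι] [Nonempty ι]
    (c d : ι → ℝ) (hc : ∀ i, 0 < c i)
    (e K₁ K₂ : ℝ) (he : 0 < e) (hK₁ : 0 < K₁)
    (βstar : ι → ℝ) (Δstar : ℝ)
    (hβ : ∀ i, 0 ≤ βstar i) (hΔ : 0 ≤ Δstar)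
    (hc1 : ∑ i, c i * βstar i = K₁)
    (hc2 : ∑ i, d i * βstar i + e * Δstar = K₂)
    (hopt : ∀ (β : ι → ℝ) (Δ : ℝ), (∀ i, 0 ≤ β i) → 0 ≤ Δ →
      ∑ i, c i * β i = K₁ → ∑ i, d i * β i + e * Δ = K₂ →
      ∑ i, βstar i + Δstar ≤ ∑ i, β i + Δ)
    (hΔpos : 0 < Δstar)
    (istar : ι)
    (huniq : ∀ i, i ≠ istar → (e - d istar) / c istar < (e - d i) / c i) :
    (∀ j, j ≠ istar → βstar j = 0) ∧
    βstar istar = K₁ / c istar ∧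
    ∑ i, βstar i + Δstar = K₂ / e + (K₁ / e) * ((e - d istar) / c istar) :=
  stage_subproblem_single_transmitter_general ι c d hc e K₁ K₂ he βstar Δstar hβ hc1 hc2 hopt hΔpos
    istar huniq
end

section
/- For every routing schedule (k, σ, A, Δ) there exists a routing schedule (k', σ', A', Δ') whose total delay ∑_{j=0}^{k'} Δ'(j) is at most ∑_{j=0}^{k} Δ(j) and which has the single-transmitter diagonal structure: for every stage j ∈ {0,…,k'}, A'(i,j) = 0 for all i ≠ j and A'(j,j) = Δ'(j). That is, the minimum delay for routing with mutual information accumulation is achieved by a schedule in which, in each stage, only the node that decoded the packet at the beginning of that stage (the source in stage 0) transmits, and it transmits for the entire stage. -/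
/-- A routing schedule for mutual information accumulation over a network with
node set `Fin (n+2)`, source node `0`, destination node `n+1`, link capacities
`C` and packet size `Imax`.  Stage `j` runs from the decoding time of the `j`-th
relay in the decoding order `σ` to that of the `(j+1)`-th; `A i j` is the
transmission duration of the node with decoding index `i` during stage `j`, and
`Δ j` is the length of stage `j`. -/
structure RoutingSchedule (n : ℕ) (C : Fin (n + 2) → Fin (n + 2) → ℝ)
    (Imax : ℝ) where
  /-- the number of cooperating relays -/
  k : ℕ
  hk : k ≤ n
  /-- the decoding order: `σ m` is the `m`-th node to decode the packet -/
  σ : ℕ → Fin (n + 2)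
  σ_inj : Set.InjOn σ (Set.Iic (k + 1))
  σ_source : σ 0 = 0
  σ_dest : σ (k + 1) = Fin.last (n + 1)
  σ_relay : ∀ m, 1 ≤ m → m ≤ k → 1 ≤ (σ m : ℕ) ∧ (σ m : ℕ) ≤ n
  /-- transmission durations -/
  A : ℕ → ℕ → ℝ
  A_nonneg : ∀ i j, 0 ≤ A i j
  A_tri : ∀ i j, j < i → A i j = 0
  /-- stage lengths -/
  Δ : ℕ → ℝ
  Δ_nonneg : ∀ j, 0 ≤ Δ j
  stage_le : ∀ j, j ≤ k → ∑ i ∈ Finset.range (j + 1), A i j ≤ Δ j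
  /-- node `σ m` accumulates at least `Imax` bits of mutual information by the
  end of stage `m - 1` -/
  decode : ∀ m, 1 ≤ m → m ≤ k + 1 →
    Imax ≤ ∑ i ∈ Finset.range m, ∑ j ∈ Finset.range m, A i j * C (σ i) (σ m)

/-- minimum-delay routing with mutual information accumulation is
achieved by a schedule in which, in each stage, only the node that decoded the
packet at the beginning of that stage transmits, for the entire stage. -/
theorem min_delay_routing_single_transmitter (n : ℕ)
    (C : Fin (n + 2) → Fin (n + 2) → ℝ) (hC : ∀ u v, 0 ≤ C u v)
    (Imax : ℝ) (hImax : 0 < Imax)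
    (G : RoutingSchedule n C Imax) :
    ∃ G' : RoutingSchedule n C Imax,
      (∑ j ∈ Finset.range (G'.k + 1), G'.Δ j) ≤
        (∑ j ∈ Finset.range (G.k + 1), G.Δ j) ∧
      ∀ j, j ≤ G'.k → (∀ i, i ≠ j → G'.A i j = 0) ∧ G'.A j j = G'.Δ j := by
  classical
  set S : ℕ → ℝ := fun i => ∑ l ∈ Finset.range (G.k + 1), G.A i l with hS
  have hSnn : ∀ i, 0 ≤ S i := fun i =>
    Finset.sum_nonneg fun l _ => G.A_nonneg i l
  refine ⟨{
    k := G.k, hk := G.hk, σ := G.σ, σ_inj := G.σ_inj, σ_source := G.σ_source,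
    σ_dest := G.σ_dest, σ_relay := G.σ_relay,
    A := fun i j => if i = j then S i else 0,
    A_nonneg := fun i j => by by_cases h : i = j <;> simp [h, hSnn],
    A_tri := fun i j h => if_neg (by omega),
    Δ := S,
    Δ_nonneg := hSnn,
    stage_le := fun j hj => by
      rw [Finset.sum_ite_eq' (Finset.range (j + 1)) j S]
      simp,
    decode := fun m h1 h2 => by
      have key : ∀ i ∈ Finset.range m,
          ∑ j ∈ Finset.range m, (if i = j then S i else 0) * C (G.σ i) (G.σ m)
            = S i * C (G.σ i) (G.σ m) := by
        intro i hi
        simp only [ite_mul, zero_mul]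
        rw [Finset.sum_ite_eq (Finset.range m) i, if_pos hi]
      rw [Finset.sum_congr rfl key]
      have h3 := G.decode m h1 h2
      refine h3.trans ?_
      refine Finset.sum_le_sum fun i _ => ?_
      rw [← Finset.sum_mul]
      refine mul_le_mul_of_nonneg_right ?_ (hC _ _)
      exact Finset.sum_le_sum_of_subset_of_nonneg
        (Finset.range_subset_range.mpr h2) (fun l _ _ => G.A_nonneg i l) }, ?_, ?_⟩
  · simp only
    rw [Finset.sum_comm]
    refine Finset.sum_le_sum fun l hl => ?_
    have hl' : l ≤ G.k := Nat.lt_succ_iff.mp (Finset.mem_range.mp hl)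
    refine le_trans (le_of_eq ?_) (G.stage_le l hl')
    refine (Finset.sum_subset (Finset.range_subset_range.mpr (by omega)) ?_).symm
    intro j _ hj
    exact G.A_tri j l (by simp at hj; omega)
  · intro j hj
    refine ⟨fun i hi => if_neg hi, if_pos rfl⟩
end

section
/- Assume that for some positive power sequence P the greedy schedule has a unique minimizer at every stage j ∈ {0,…,k}. Then for every positive power sequence Q the greedy schedule is well defined with unique minimizers and satisfies: u_j^P = u_j^Q for all j ∈ {0,…,k+1} (the decoding order is the same for all positive power allocations), and Δ_j^P · P_j = Δ_j^Q · Q_j for all j ∈ {0,…,k} (each stage's energy, hence the total energy ∑_{j=0}^{k} Δ_j P_j needed to deliver the packet to all nodes in the order, is the same for all positive power allocations). -/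
/-- The mutual information accumulated at node `v` by the start of stage `j`
under the greedy schedule with decoding order `u`, stage lengths `Δ` and power
spectral densities `P`, when the rate–power functions are linear: the stage-`m`
transmitter `u m` at PSD `P m` delivers information to `v` at rate
`γ * P m * h (u m) v`. -/
def accInfo (k : ℕ) (γ : ℝ) (h : Fin (k + 2) → Fin (k + 2) → ℝ)
    (P Δ : ℕ → ℝ) (u : ℕ → Fin (k + 2)) (j : ℕ) (v : Fin (k + 2)) : ℝ :=
  γ * ∑ m ∈ Finset.range j, Δ m * P m * h (u m) v

/-- `IsGreedySchedule k γ Imax h P u Δ` says that `u` (the decoding order,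
starting at the source `u 0 = 0`) and `Δ` (the stage lengths) constitute the
greedy schedule for the power sequence `P`, with a *unique* minimizer at every
stage: in stage `j` the node `u j` transmits at PSD `P j`, the stage length
`Δ j` is the time needed for the next decoding node `u (j+1)` to accumulate
`Imax` bits, and every other still-undecoded node would strictly take longer. -/
def IsGreedySchedule (k : ℕ) (γ Imax : ℝ)
    (h : Fin (k + 2) → Fin (k + 2) → ℝ) (P : ℕ → ℝ)
    (u : ℕ → Fin (k + 2)) (Δ : ℕ → ℝ) : Prop :=
  u 0 = 0 ∧
  ∀ j, j ≤ k →
    (∀ m, m ≤ j → u (j + 1) ≠ u m) ∧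
    Δ j = (Imax - accInfo k γ h P Δ u j (u (j + 1))) /
      (γ * P j * h (u j) (u (j + 1))) ∧
    (∀ v : Fin (k + 2), (∀ m, m ≤ j → v ≠ u m) → v ≠ u (j + 1) →
      Δ j < (Imax - accInfo k γ h P Δ u j v) / (γ * P j * h (u j) v))

/-- with linear rate–power functions, if for some positive power
sequence `P` the greedy schedule has a unique minimizer at every stage, then
for every positive power sequence `Q` the greedy schedule is well defined with
unique minimizers, the decoding order is the same, and each stage's energy
`Δ j * P j` (hence the total energy) is the same for all positive power
allocations. -/
theorem greedy_linear_rate_power_invariance (k : ℕ) (γ Imax : ℝ)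
    (hγ : 0 < γ) (hImax : 0 < Imax)
    (h : Fin (k + 2) → Fin (k + 2) → ℝ) (hh : ∀ u v, u ≠ v → 0 < h u v)
    (P : ℕ → ℝ) (hP : ∀ j, 0 < P j)
    (u : ℕ → Fin (k + 2)) (Δ : ℕ → ℝ)
    (hgreedy : IsGreedySchedule k γ Imax h P u Δ) :
    ∀ Q : ℕ → ℝ, (∀ j, 0 < Q j) →
      ∃ Δ' : ℕ → ℝ, IsGreedySchedule k γ Imax h Q u Δ' ∧
        ∀ j, j ≤ k → Δ j * P j = Δ' j * Q j := by
  intro Q hQ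
  refine ⟨fun j => Δ j * P j / Q j, ?_, ?_⟩
  · obtain ⟨h0, hstep⟩ := hgreedy
    have hacc : ∀ j v, accInfo k γ h Q (fun j => Δ j * P j / Q j) u j v
        = accInfo k γ h P Δ u j v := by
      intro j v
      unfold accInfo
      congr 1
      apply Finset.sum_congr rfl
      intro m _
      rw [div_mul_eq_mul_div, div_mul_eq_mul_div, div_eq_iff (hQ m).ne']
      ring
    refine ⟨h0, fun j hj => ?_⟩
    obtain ⟨hne, heq, hlt⟩ := hstep j hj
    refine ⟨hne, ?_, ?_⟩
    · show Δ j * P j / Q j = _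
      rw [hacc, heq]
      have hPj := (hP j).ne'
      have hQj := (hQ j).ne'
      rcases eq_or_ne (h (u j) (u (j+1))) 0 with hz | hz
      · simp [hz]
      · field_simp
    · intro v hv hv'
      have := hlt v hv hv'
      rw [hacc]
      have hhv : 0 < h (u j) v := hh _ _ (by intro hvv; exact hv j le_rfl hvv.symm)
      have hhu : 0 < h (u j) (u (j+1)) := hh _ _ (hne j le_rfl).symm
      have hPQ : 0 < P j / Q j := div_pos (hP j) (hQ j)
      calc Δ j * P j / Q j = Δ j * (P j / Q j) := by ring
        _ < (Imax - accInfo k γ h P Δ u j v) / (γ * P j * h (u j) v) * (P j / Q j) :=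
            by exact mul_lt_mul_of_pos_right this hPQ
        _ = (Imax - accInfo k γ h P Δ u j v) / (γ * Q j * h (u j) v) := by
            have hPj := (hP j).ne'
            have hQj := (hQ j).ne'
            field_simp
  · intro j hj
    show Δ j * P j = Δ j * P j / Q j * Q j
    rw [div_mul_cancel₀ _ (hQ j).ne']
end

section
/- Let c > 0 and define a : ℕ → ℝ by a(0) = c, a(1) = c − a(0)/4, and a(n+2) = c − a(n+1)/4 − a(n)/9 for all n ≥ 0. Then for every n ≥ 1 we have 0 < a(n) < c. -/
/-- for the stage-duration recursion `a 0 = c`,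
`a 1 = c - a 0 / 4`, `a (n+2) = c - a (n+1) / 4 - a n / 9` with `c > 0`,
every term `a n` with `n ≥ 1` satisfies `0 < a n < c`. -/
theorem line_recursion_bounds (c : ℝ) (hc : 0 < c) (a : ℕ → ℝ)
    (h0 : a 0 = c) (h1 : a 1 = c - a 0 / 4)
    (hrec : ∀ n : ℕ, a (n + 2) = c - a (n + 1) / 4 - a n / 9) :
    ∀ n : ℕ, 1 ≤ n → 0 < a n ∧ a n < c := by
  have key : ∀ n, 0 < a n ∧ a n ≤ c := by
    intro n
    induction n using Nat.twoStepInduction with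
    | zero => rw [h0]; exact ⟨hc, le_refl c⟩
    | one => rw [h1, h0]; constructor <;> linarith
    | more m ih1 ih2 =>
      rw [hrec]
      obtain ⟨p1, l1⟩ := ih1
      obtain ⟨p2, l2⟩ := ih2
      constructor <;> linarith
  intro n hn
  match n, hn with
  | 1, _ => rw [h1, h0]; constructor <;> linarith
  | (m + 2), _ =>
    rw [hrec]
    obtain ⟨p1, l1⟩ := key m
    obtain ⟨p2, l2⟩ := key (m + 1)
    constructor <;> linarith
end

section
/- Let c > 0 and define a : ℕ → ℝ by a(0) = c, a(1) = c − a(0)/4, and a(n+2) = c − a(n+1)/4 − a(n)/9 for all n ≥ 0. Then for every n ≥ 2, ∑_{i=0}^{n} a(i) < c·(36n + 53)/49. In particular, since the delay of traditional multi-hop routing over the same line is (n+1)·c, the total delay ∑_{i=0}^{n} a(i) of routing with mutual information accumulation is less than the fraction (36n + 53)/(49(n+1)) of the traditional routing delay, a fraction which tends to 36/49 as n → ∞. -/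
/-!
The quantity `49 ∑_{i ≤ n} a i + 36 a (n+1) - 4 a n - 36 c n` is conserved by the recursion,
so the partial sum is `36 c n / 49` plus a boundary term in `a n, a (n+1)`. Since every `a n`
lies in `(0, c]` and `a n < c` from `n = 2` on, the boundary term is less than `53 c / 49`.
-/

open Finset Set

section StageRecursion

variable {a : ℕ → ℝ} {c : ℝ}

theorem stage_mem_Ioc (hrec : ∀ n, a (n + 2) = c - a (n + 1) / 4 - a n / 9)
    (h0 : a 0 ∈ Ioc 0 c) (h1 : a 1 ∈ Ioc 0 c) (n : ℕ) : a n ∈ Ioc 0 c := by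
  induction n using Nat.twoStepInduction with
  | zero => exact h0
  | one => exact h1
  | more n ihn ihn1 =>
    obtain ⟨hpos, hle⟩ := ihn
    obtain ⟨hpos1, hle1⟩ := ihn1
    rw [hrec n]
    constructor <;> linarith

theorem stage_lt (hrec : ∀ n, a (n + 2) = c - a (n + 1) / 4 - a n / 9)
    (hpos : ∀ n, 0 < a n) (n : ℕ) : a (n + 2) < c := by
  have := hpos n
  have := hpos (n + 1)
  rw [hrec n]
  linarith

theorem stage_sum_conserved (hrec : ∀ n, a (n + 2) = c - a (n + 1) / 4 - a n / 9) (n : ℕ) :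
    49 * ∑ i ∈ range (n + 1), a i + 36 * a (n + 1) - 4 * a n
      = 36 * c * n + 45 * a 0 + 36 * a 1 := by
  induction n with
  | zero => simp only [zero_add, sum_range_one, Nat.cast_zero]; ring
  | succ n ih =>
    rw [sum_range_succ, hrec n, Nat.cast_succ]
    linear_combination ih

end StageRecursion

/-- for the stage-duration recursion `a 0 = c`,
`a 1 = c - a 0 / 4`, `a (n+2) = c - a (n+1) / 4 - a n / 9` with `c > 0`, for
every `n ≥ 2` the total delay satisfies
`∑_{i=0}^{n} a i < c * (36n + 53) / 49`; in particular, since traditional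
multi-hop routing over the same line has delay `(n+1) * c`, the total delay of
routing with mutual information accumulation is less than the fraction
`(36n + 53) / (49(n+1))` of the traditional routing delay. -/
theorem line_recursion_delay_gain (c : ℝ) (hc : 0 < c) (a : ℕ → ℝ)
    (h0 : a 0 = c) (h1 : a 1 = c - a 0 / 4)
    (hrec : ∀ n : ℕ, a (n + 2) = c - a (n + 1) / 4 - a n / 9) :
    ∀ n : ℕ, 2 ≤ n →
      (∑ i ∈ Finset.range (n + 1), a i) < c * (36 * (n : ℝ) + 53) / 49 ∧
      (∑ i ∈ Finset.range (n + 1), a i) <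
        ((36 * (n : ℝ) + 53) / (49 * ((n : ℝ) + 1))) * (((n : ℝ) + 1) * c) := by
  have hmem : ∀ n, a n ∈ Ioc 0 c :=
    stage_mem_Ioc hrec (by rw [h0]; exact ⟨hc, le_rfl⟩)
      (by rw [h1, h0]; constructor <;> linarith)
  intro n hn
  have hsum : ∑ i ∈ range (n + 1), a i < c * (36 * (n : ℝ) + 53) / 49 := by
    obtain ⟨m, rfl⟩ : ∃ m, n = m + 2 := ⟨n - 2, by omega⟩
    have hcons := stage_sum_conserved hrec (m + 2)
    have hlt := stage_lt hrec (fun k => (hmem k).1) m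
    rw [hrec (m + 1), h1, h0] at hcons
    linarith [(hmem (m + 1)).2]
  have hdelay : ((36 * (n : ℝ) + 53) / (49 * ((n : ℝ) + 1))) * (((n : ℝ) + 1) * c)
      = c * (36 * (n : ℝ) + 53) / 49 := by
    field_simp
  exact ⟨hsum, hdelay ▸ hsum⟩
end

section
/- For every broadcast schedule (σ, A, Δ) there exists a broadcast schedule (σ', A', Δ') whose total delay ∑_{j=0}^{n−1} Δ'(j) is at most ∑_{j=0}^{n−1} Δ(j) and in which at most one node transmits in each stage: for every stage j ∈ {0,…,n−1} there exists an index r_j ∈ {0,…,j} such that A'(i,j) = 0 for all i ≠ r_j and A'(r_j, j) = Δ'(j). (Unlike the unicast routing case, the single transmitter r_j of stage j need not be node j; it may be any node that has already decoded the packet, and a node may transmit in more than one stage.) -/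
/-- A broadcast schedule for mutual information accumulation over a network
with node set `Fin (n+1)`, source node `0`, link capacities `C` and packet
size `Imax`.  `σ` is the decoding order (a bijection of the stage indices
`{0,…,n}` onto the nodes, with `σ 0 = 0` the source), `A i j` is the
transmission duration of the node with decoding index `i` in stage `j`, and
`Δ j` is the length of stage `j`. -/
structure BroadcastSchedule (n : ℕ) (C : Fin (n + 1) → Fin (n + 1) → ℝ)
    (Imax : ℝ) where
  /-- the decoding order: `σ m` is the `m`-th node to decode the packet -/
  σ : ℕ → Fin (n + 1)
  σ_inj : Set.InjOn σ (Set.Iic n)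
  σ_source : σ 0 = 0
  /-- transmission durations -/
  A : ℕ → ℕ → ℝ
  A_nonneg : ∀ i j, 0 ≤ A i j
  A_tri : ∀ i j, j < i → A i j = 0
  /-- stage lengths -/
  Δ : ℕ → ℝ
  Δ_nonneg : ∀ j, 0 ≤ Δ j
  stage_le : ∀ j, j < n → ∑ i ∈ Finset.range (j + 1), A i j ≤ Δ j
  /-- node `σ m` accumulates at least `Imax` bits of mutual information by the
  end of stage `m - 1` -/
  decode : ∀ m, 1 ≤ m → m ≤ n →
    Imax ≤ ∑ i ∈ Finset.range m, ∑ j ∈ Finset.range m, A i j * C (σ i) (σ m)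

/-- minimum-delay broadcast with mutual information accumulation
is achieved by a schedule in which at most one node transmits in each stage:
in each stage `j` some already-decoded node `r_j ≤ j` (not necessarily node
`j`) transmits for the entire stage. -/
theorem min_delay_broadcast_single_transmitter (n : ℕ)
    (C : Fin (n + 1) → Fin (n + 1) → ℝ) (hC : ∀ u v, 0 ≤ C u v)
    (Imax : ℝ) (hImax : 0 < Imax)
    (G : BroadcastSchedule n C Imax) :
    ∃ G' : BroadcastSchedule n C Imax,
      (∑ j ∈ Finset.range n, G'.Δ j) ≤ (∑ j ∈ Finset.range n, G.Δ j) ∧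
      ∀ j, j < n → ∃ r, r ≤ j ∧ (∀ i, i ≠ r → G'.A i j = 0) ∧
        G'.A r j = G'.Δ j := by
  classical
  -- total transmission time of node `i` (over the relevant stages)
  set S : ℕ → ℝ := fun i => ∑ k ∈ Finset.Ico i n, G.A i k with hS
  have hS_nonneg : ∀ i, 0 ≤ S i := fun i =>
    Finset.sum_nonneg fun k _ => G.A_nonneg i k
  -- the new schedule: node `j` transmits for time `S j` in stage `j`
  refine ⟨⟨G.σ, G.σ_inj, G.σ_source,
    fun i j => if i = j ∧ j < n then S j else 0, ?_, ?_,
    fun j => if j < n then S j else 0, ?_, ?_, ?_⟩, ?_, ?_⟩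
  · intro i j
    by_cases h : i = j ∧ j < n <;> simp [h, hS_nonneg]
  · intro i j hij
    have : ¬(i = j ∧ j < n) := by rintro ⟨rfl, _⟩; exact lt_irrefl _ hij
    simp [this]
  · intro j
    by_cases h : j < n <;> simp [h, hS_nonneg]
  · intro j hj
    have : ∀ i ∈ Finset.range (j + 1),
        (if i = j ∧ j < n then S j else 0) = if i = j then S j else 0 := by
      intro i _
      by_cases h : i = j <;> simp [h, hj]
    rw [Finset.sum_congr rfl this, Finset.sum_ite_eq' (Finset.range (j + 1)) j]
    simp [Nat.lt_succ_self j, hj]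
  · -- decode
    intro m hm1 hmn
    refine le_trans (G.decode m hm1 hmn) ?_
    refine Finset.sum_le_sum fun i hi => ?_
    have him : i < m := Finset.mem_range.mp hi
    have hin : i < n := lt_of_lt_of_le him hmn
    -- RHS inner sum collapses to the `j = i` term
    have hcollapse : ∑ j ∈ Finset.range m,
        (if i = j ∧ j < n then S j else 0) * C (G.σ i) (G.σ m)
        = S i * C (G.σ i) (G.σ m) := by
      rw [Finset.sum_eq_single i]
      · simp [hin]
      · intro j _ hji
        have : ¬(i = j ∧ j < n) := by rintro ⟨rfl, _⟩; exact hji rfl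
        simp [this]
      · intro h; exact absurd (Finset.mem_range.mpr him) h
    rw [hcollapse]
    -- LHS inner sum: ∑_{j<m} A i j ≤ S i
    have hsum : ∑ j ∈ Finset.range m, G.A i j ≤ S i := by
      have h1 : ∑ j ∈ Finset.range m, G.A i j = ∑ j ∈ Finset.Ico i m, G.A i j := by
        refine (Finset.sum_subset ?_ ?_).symm
        · intro x hx
          exact Finset.mem_range.mpr (Finset.mem_Ico.mp hx).2
        · intro x _ hx
          rcases Nat.lt_or_ge x i with h | h
          · exact G.A_tri i x h
          · exact absurd (Finset.mem_Ico.mpr ⟨h, Finset.mem_range.mp ‹x ∈ Finset.range m›⟩) hx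
      rw [h1, hS]
      refine Finset.sum_le_sum_of_subset_of_nonneg ?_ ?_
      · exact Finset.Ico_subset_Ico le_rfl hmn
      · intro k _ _; exact G.A_nonneg i k
    calc ∑ j ∈ Finset.range m, G.A i j * C (G.σ i) (G.σ m)
        = (∑ j ∈ Finset.range m, G.A i j) * C (G.σ i) (G.σ m) := by
          rw [Finset.sum_mul]
      _ ≤ S i * C (G.σ i) (G.σ m) :=
          mul_le_mul_of_nonneg_right hsum (hC _ _)
  · -- total delay
    have : ∀ j ∈ Finset.range n, (if j < n then S j else 0) = S j := by
      intro j hj; simp [Finset.mem_range.mp hj]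
    rw [Finset.sum_congr rfl this]
    have hswap : ∑ j ∈ Finset.range n, S j
        = ∑ k ∈ Finset.range n, ∑ j ∈ Finset.range (k + 1), G.A j k := by
      rw [hS]
      simp only [← Nat.Ico_zero_eq_range]
      rw [Finset.sum_Ico_Ico_comm]
    rw [hswap]
    exact Finset.sum_le_sum fun k hk => G.stage_le k (Finset.mem_range.mp hk)
  · -- single transmitter
    intro j hj
    refine ⟨j, le_rfl, ?_, ?_⟩
    · intro i hij
      have : ¬(i = j ∧ j < n) := by rintro ⟨rfl, _⟩; exact hij rfl
      simp [this]
    · simp [hj]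
end
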